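/- The maximum number ex(n, BCD) of triples in a triple system on n vertices that is B-free, C-free and D-free satisfies ex(n, BCD) = (1/4)n²(1 − o(1)); that is, for every ε > 0 there exists n₀ such that for all n ≥ n₀ one has (1/4 − ε)n² ≤ ex(n, BCD) ≤ (1/4)n². Equivalently, ex(n, BCD)/n² tends to 1/4 as n tends to infinity. -/
import Mathlib
set_option maxHeartbeats 2000000

/-- A triple system: a family of 3-element subsets of the vertex type. -/
def isTripleSystem {V : Type*} (F : Finset (Finset V)) : Prop :=
  ∀ t ∈ F, t.card = 3

/-- `F` contains the configuration described by `pattern` (a list of triples on `Fin m`)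
if there is an injection of `Fin m` into the vertex set mapping each triple of the
pattern to a member of `F`. -/
def containsConfig {V : Type*} [DecidableEq V] {m : ℕ}
    (F : Finset (Finset V)) (pattern : List (Finset (Fin m))) : Prop :=
  ∃ f : Fin m → V, Function.Injective f ∧ ∀ t ∈ pattern, t.image f ∈ F

/-- Configuration A: triples {1,2,4},{1,3,5},{2,3,6} on 6 vertices (0-indexed). -/
def configA : List (Finset (Fin 6)) := [{0,1,3}, {0,2,4}, {1,2,5}]

/-- Configuration B: triples {1,2,5},{1,3,4},{2,3,4} on 5 vertices (0-indexed). -/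
def configB : List (Finset (Fin 5)) := [{0,1,4}, {0,2,3}, {1,2,3}]

/-- Configuration C: triples {1,2,4},{1,3,4},{2,3,4} on 4 vertices (0-indexed). -/
def configC : List (Finset (Fin 4)) := [{0,1,3}, {0,2,3}, {1,2,3}]

/-- Configuration D: triples {1,2,3},{1,3,4},{2,3,5} on 5 vertices (0-indexed). -/
def configD : List (Finset (Fin 5)) := [{0,1,2}, {0,2,3}, {1,2,4}]


/-- ex(n, BCD): the maximum number of triples of a B-, C- and D-free triple system
on n vertices. -/
noncomputable def exBCD (n : ℕ) : ℕ :=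
  sSup {k : ℕ | ∃ F : Finset (Finset (Fin n)), isTripleSystem F ∧
    ¬ containsConfig F configB ∧ ¬ containsConfig F configC ∧
    ¬ containsConfig F configD ∧ F.card = k}

lemma image_triple {α β : Type*} [DecidableEq α] [DecidableEq β] (f : α → β) (a b c : α) :
    ({a, b, c} : Finset α).image f = {f a, f b, f c} := by
  simp [Finset.image_insert]

lemma inj4 {β : Type*} {a b c d : β} (hab : a≠b) (hac : a≠c) (had : a≠d) (hbc : b≠c)
    (hbd : b≠d) (hcd : c≠d) : Function.Injective ![a,b,c,d] := by
  intro i j h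
  fin_cases i <;> fin_cases j <;> simp_all

lemma inj5 {β : Type*} {a b c d e : β} (hab : a≠b) (hac : a≠c) (had : a≠d) (hae : a≠e)
    (hbc : b≠c) (hbd : b≠d) (hbe : b≠e) (hcd : c≠d) (hce : c≠e) (hde : d≠e) :
    Function.Injective ![a,b,c,d,e] := by
  intro i j h
  fin_cases i <;> fin_cases j <;> simp_all

section Upper

variable {n : ℕ} (F : Finset (Finset (Fin n)))

/-- codegree of a pair -/
def codeg (p : Finset (Fin n)) : ℕ := (F.filter (fun t => p ⊆ t)).card

/-- the pairs of T with codegree 1 -/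
def goodPairs (T : Finset (Fin n)) : Finset (Finset (Fin n)) :=
  (T.powersetCard 2).filter (fun p => codeg F p = 1)

lemma goodPairs_disjoint {T T' : Finset (Fin n)} (hT : T ∈ F) (hT' : T' ∈ F)
    (hne : T ≠ T') : Disjoint (goodPairs F T) (goodPairs F T') := by
  rw [Finset.disjoint_left]
  intro p hp hp'
  simp only [goodPairs, Finset.mem_filter, Finset.mem_powersetCard] at hp hp'
  have h1 : T ∈ F.filter (fun t => p ⊆ t) := by
    simp [Finset.mem_filter, hT, hp.1.1]
  have h2 : T' ∈ F.filter (fun t => p ⊆ t) := by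
    simp [Finset.mem_filter, hT', hp'.1.1]
  have : 2 ≤ codeg F p := Finset.one_lt_card.2 ⟨T, h1, T', h2, hne⟩
  omega

lemma two_le_goodPairs (hts : isTripleSystem F)
    (hC : ¬ containsConfig F configC) (hD : ¬ containsConfig F configD)
    {T : Finset (Fin n)} (hT : T ∈ F) : 2 ≤ (goodPairs F T).card := by
  by_contra hcon
  push_neg at hcon
  have hT3 : T.card = 3 := hts T hT
  -- the set of "bad" pairs has at least 2 elements
  have hP2card : (T.powersetCard 2).card = 3 := by
    rw [Finset.card_powersetCard, hT3]; decide
  have hsplit := Finset.card_filter_add_card_filter_not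
    (s := T.powersetCard 2) (p := fun p => codeg F p = 1)
  have hbad : 2 ≤ ((T.powersetCard 2).filter (fun p => ¬ codeg F p = 1)).card := by
    have : (goodPairs F T).card + ((T.powersetCard 2).filter (fun p => ¬ codeg F p = 1)).card = 3 := by
      rw [goodPairs] at *; omega
    omega
  obtain ⟨p, hp, q, hq, hpq⟩ := Finset.one_lt_card.1 hbad
  simp only [Finset.mem_filter, Finset.mem_powersetCard] at hp hq
  obtain ⟨⟨hpT, hp2⟩, hpcod⟩ := hp
  obtain ⟨⟨hqT, hq2⟩, hqcod⟩ := hq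
  -- codegrees are at least 2
  have hcod2 : ∀ r : Finset (Fin n), r ⊆ T → codeg F r ≠ 1 → ∃ T' ∈ F, r ⊆ T' ∧ T' ≠ T := by
    intro r hrT hrc
    have hTmem : T ∈ F.filter (fun t => r ⊆ t) := by simp [Finset.mem_filter, hT, hrT]
    have h1 : 1 ≤ codeg F r := Finset.card_pos.2 ⟨T, hTmem⟩
    have h2 : 2 ≤ codeg F r := by omega
    unfold codeg at h2
    obtain ⟨T', hT', hne⟩ := Finset.exists_mem_ne (s := F.filter (fun t => r ⊆ t)) (by omega) T
    simp only [Finset.mem_filter] at hT'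
    exact ⟨T', hT'.1, hT'.2, hne⟩
  obtain ⟨T₁, hT₁F, hpT₁, hT₁ne⟩ := hcod2 p hpT hpcod
  obtain ⟨T₂, hT₂F, hqT₂, hT₂ne⟩ := hcod2 q hqT hqcod
  -- p ∩ q is a single vertex
  have hunion : p ∪ q ⊆ T := Finset.union_subset hpT hqT
  have hucard : (p ∪ q).card = 3 := by
    have hle : (p ∪ q).card ≤ 3 := hT3 ▸ Finset.card_le_card hunion
    have := Finset.card_union_add_card_inter p q
    have hge : 2 < (p ∪ q).card := by
      rcases Nat.lt_or_ge 2 (p ∪ q).card with h | h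
      · exact h
      · exfalso
        have hip : (p ∩ q).card ≥ 2 := by omega
        have h1 : p ∩ q = p := Finset.eq_of_subset_of_card_le Finset.inter_subset_left (by omega)
        have h2 : p ∩ q = q := Finset.eq_of_subset_of_card_le Finset.inter_subset_right (by omega)
        exact hpq (h1 ▸ h2)
    omega
  have hTeq : p ∪ q = T := Finset.eq_of_subset_of_card_le hunion (by omega)
  have hicard : (p ∩ q).card = 1 := by
    have := Finset.card_union_add_card_inter p q
    omega
  obtain ⟨v, hv⟩ := Finset.card_eq_one.1 hicard
  have hvp : v ∈ p := Finset.inter_subset_left (hv ▸ Finset.mem_singleton_self v)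
  have hvq : v ∈ q := Finset.inter_subset_right (hv ▸ Finset.mem_singleton_self v)
  obtain ⟨a1, b1, hab1, hp'⟩ := Finset.card_eq_two.1 hp2
  obtain ⟨a2, b2, hab2, hq'⟩ := Finset.card_eq_two.1 hq2
  -- c : the vertex of p other than v
  have hc : ∃ c, c ≠ v ∧ p = {v, c} := by
    rcases (by rw [hp'] at hvp; simpa using hvp : v = a1 ∨ v = b1) with h | h
    · exact ⟨b1, by rw [← h] at hab1; exact Ne.symm hab1, by rw [hp', ← h]⟩
    · refine ⟨a1, by rw [← h] at hab1; exact hab1, ?_⟩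
      rw [hp', ← h]
      ext z; simp; try tauto
  obtain ⟨c, hcv, hpvc⟩ := hc
  have hl : ∃ l, l ≠ v ∧ q = {v, l} := by
    rcases (by rw [hq'] at hvq; simpa using hvq : v = a2 ∨ v = b2) with h | h
    · exact ⟨b2, by rw [← h] at hab2; exact Ne.symm hab2, by rw [hq', ← h]⟩
    · refine ⟨a2, by rw [← h] at hab2; exact hab2, ?_⟩
      rw [hq', ← h]
      ext z; simp; try tauto
  obtain ⟨l, hlv, hqvl⟩ := hl
  have hcl : c ≠ l := by
    intro h
    have : c ∈ p ∩ q := Finset.mem_inter.2 ⟨by simp [hpvc], by simp [hqvl, h]⟩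
    rw [hv] at this
    exact hcv (by simpa using this)
  have hTvcl : T = {v, c, l} := by
    rw [← hTeq, hpvc, hqvl]
    ext z; simp; try tauto
  -- extra vertices x and y
  have hext : ∀ T' ∈ F, ∀ r : Finset (Fin n), r ⊆ T' → r.card = 2 →
      ∃ x, x ∉ r ∧ T' = insert x r := by
    intro T' hT'F r hrT' hr2
    have h3 : T'.card = 3 := hts T' hT'F
    have hsd : (T' \ r).card = 1 := by
      rw [Finset.card_sdiff_of_subset hrT', h3, hr2]
    obtain ⟨x, hx⟩ := Finset.card_eq_one.1 hsd
    refine ⟨x, ?_, ?_⟩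
    · have : x ∈ T' \ r := hx ▸ Finset.mem_singleton_self x
      exact (Finset.mem_sdiff.1 this).2
    · have := Finset.union_sdiff_of_subset hrT'
      rw [hx] at this
      rw [← this]
      ext z; simp; try tauto
  obtain ⟨x, hxp, hT₁eq⟩ := hext T₁ hT₁F p hpT₁ hp2
  obtain ⟨y, hyq, hT₂eq⟩ := hext T₂ hT₂F q hqT₂ hq2
  have hxv : x ≠ v := fun h => hxp (by simp [hpvc, h])
  have hxc : x ≠ c := fun h => hxp (by simp [hpvc, h])
  have hyv : y ≠ v := fun h => hyq (by simp [hqvl, h])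
  have hyl : y ≠ l := fun h => hyq (by simp [hqvl, h])
  have hxl : x ≠ l := by
    intro h
    apply hT₁ne
    rw [hT₁eq, hpvc, hTvcl, h]
    ext z; simp; try tauto
  have hyc : y ≠ c := by
    intro h
    apply hT₂ne
    rw [hT₂eq, hqvl, hTvcl, h]
    ext z; simp; try tauto
  have hT₁vcx : T₁ = {v, c, x} := by
    rw [hT₁eq, hpvc]; ext z; simp; try tauto
  have hT₂vly : T₂ = {v, l, y} := by
    rw [hT₂eq, hqvl]; ext z; simp; try tauto
  by_cases hxy : x = y
  · -- configuration C
    apply hC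
    refine ⟨![c, l, x, v], inj4 hcl hxc.symm hcv hxl.symm hlv hxv, ?_⟩
    intro t ht
    simp only [configC, List.mem_cons, List.not_mem_nil, or_false] at ht
    rcases ht with rfl | rfl | rfl
    · rw [show ({0,1,3} : Finset (Fin 4)).image ![c, l, x, v] = {c, l, v} by
        rw [image_triple]; simp]
      rw [show ({c, l, v} : Finset (Fin n)) = T by rw [hTvcl]; ext z; simp; try tauto]
      exact hT
    · rw [show ({0,2,3} : Finset (Fin 4)).image ![c, l, x, v] = {c, x, v} by
        rw [image_triple]; simp]
      rw [show ({c, x, v} : Finset (Fin n)) = T₁ by rw [hT₁vcx]; ext z; simp; try tauto]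
      exact hT₁F
    · rw [show ({1,2,3} : Finset (Fin 4)).image ![c, l, x, v] = {l, x, v} by
        rw [image_triple]; simp]
      rw [show ({l, x, v} : Finset (Fin n)) = T₂ by
        rw [hT₂vly, ← hxy]; ext z; simp; try tauto]
      exact hT₂F
  · -- configuration D
    apply hD
    refine ⟨![c, l, v, x, y],
      inj5 hcl hcv hxc.symm hyc.symm hlv hxl.symm hyl.symm (fun h => hxv h.symm)
        (fun h => hyv h.symm) hxy, ?_⟩
    intro t ht
    simp only [configD, List.mem_cons, List.not_mem_nil, or_false] at ht
    rcases ht with rfl | rfl | rfl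
    · rw [show ({0,1,2} : Finset (Fin 5)).image ![c, l, v, x, y] = {c, l, v} by
        rw [image_triple]; simp]
      rw [show ({c, l, v} : Finset (Fin n)) = T by rw [hTvcl]; ext z; simp; try tauto]
      exact hT
    · rw [show ({0,2,3} : Finset (Fin 5)).image ![c, l, v, x, y] = {c, v, x} by
        rw [image_triple]; simp]
      rw [show ({c, v, x} : Finset (Fin n)) = T₁ by rw [hT₁vcx]; ext z; simp; try tauto]
      exact hT₁F
    · rw [show ({1,2,4} : Finset (Fin 5)).image ![c, l, v, x, y] = {l, v, y} by
        rw [image_triple]; simp]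
      rw [show ({l, v, y} : Finset (Fin n)) = T₂ by rw [hT₂vly]; ext z; simp; try tauto]
      exact hT₂F

lemma upper_count (hts : isTripleSystem F)
    (hC : ¬ containsConfig F configC) (hD : ¬ containsConfig F configD) :
    2 * F.card ≤ Nat.choose n 2 := by
  classical
  calc 2 * F.card = ∑ _T ∈ F, 2 := by rw [Finset.sum_const, smul_eq_mul, mul_comm]
    _ ≤ ∑ T ∈ F, (goodPairs F T).card :=
        Finset.sum_le_sum (fun T hT => two_le_goodPairs F hts hC hD hT)
    _ = (F.biUnion (goodPairs F)).card :=
        (Finset.card_biUnion (fun x hx y hy hxy => goodPairs_disjoint F hx hy hxy)).symm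
    _ ≤ ((Finset.univ : Finset (Fin n)).powersetCard 2).card := by
        apply Finset.card_le_card
        intro p hp
        rw [Finset.mem_biUnion] at hp
        obtain ⟨T, hT, hpT⟩ := hp
        simp only [goodPairs, Finset.mem_filter, Finset.mem_powersetCard] at hpT
        rw [Finset.mem_powersetCard]
        exact ⟨Finset.subset_univ _, hpT.1.2⟩
    _ = Nat.choose n 2 := by
        rw [Finset.card_powersetCard, Finset.card_univ, Fintype.card_fin]

lemma upper_real (hts : isTripleSystem F)
    (hC : ¬ containsConfig F configC) (hD : ¬ containsConfig F configD) :
    (F.card : ℝ) ≤ 1 / 4 * (n : ℝ) ^ 2 := by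
  have h := upper_count F hts hC hD
  have h2 : 2 * Nat.choose n 2 = n * (n - 1) := by
    rw [Nat.choose_two_right, mul_comm]
    apply Nat.div_mul_cancel
    rcases n with _ | m
    · simp
    · have : (m + 1) * m = m * (m + 1) := mul_comm _ _
      simp only [Nat.succ_sub_one]
      rw [this]
      exact (Nat.even_mul_succ_self m).two_dvd
  have h4 : 4 * F.card ≤ n * n := by
    have hle : n * (n - 1) ≤ n * n := Nat.mul_le_mul_left n (Nat.sub_le n 1)
    omega
  have hc : (4 : ℝ) * (F.card : ℝ) ≤ (n : ℝ) * (n : ℝ) := by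
    have := (Nat.cast_le (α := ℝ)).2 h4
    push_cast at this
    linarith
  nlinarith [sq_nonneg ((n : ℝ))]

end Upper

section Construction

/-! The construction: vertex set `ZMod (4k+5) × ZMod (g+2)` ("groups" indexed by the first
coordinate).  For `i ≤ k` set `A i = i+1`, `B i = 2k+3-(i+1)`, `T i = B i - A i`.
Triples: `{(y,j), (y+T i, j), (y+B i, m)}` for `m ≠ j`. -/

instance nz (k : ℕ) : NeZero (4*k+5) := ⟨by omega⟩

def Ai (i : ℕ) : ℕ := i + 1
def Bi (k i : ℕ) : ℕ := 2*k + 3 - (i+1)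
def Ti (k i : ℕ) : ℕ := 2*k + 3 - 2*(i+1)

def tri (k g : ℕ) (y : ZMod (4*k+5)) (i : ℕ) (j m : ZMod (g+2)) :
    Finset (ZMod (4*k+5) × ZMod (g+2)) :=
  {(y, j), (y + (Ti k i : ℕ), j), (y + (Bi k i : ℕ), m)}

def Fam (k g : ℕ) : Finset (Finset (ZMod (4*k+5) × ZMod (g+2))) :=
  (((Finset.univ : Finset (ZMod (4*k+5))) ×ˢ (Finset.range (k+1) ×ˢ
      ((Finset.univ : Finset (ZMod (g+2))) ×ˢ (Finset.univ : Finset (ZMod (g+2)))))).filter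
    (fun p => p.2.2.2 ≠ p.2.2.1)).image (fun p => tri k g p.1 p.2.1 p.2.2.1 p.2.2.2)

variable {k g : ℕ}

lemma mem_Fam {s : Finset (ZMod (4*k+5) × ZMod (g+2))} :
    s ∈ Fam k g ↔ ∃ y i j m, i ≤ k ∧ m ≠ j ∧ s = tri k g y i j m := by
  constructor
  · intro hs
    rw [Fam, Finset.mem_image] at hs
    obtain ⟨p, hp, hps⟩ := hs
    rw [Finset.mem_filter, Finset.mem_product] at hp
    obtain ⟨⟨-, hp2⟩, hne⟩ := hp
    rw [Finset.mem_product] at hp2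
    obtain ⟨hrange, -⟩ := hp2
    exact ⟨p.1, p.2.1, p.2.2.1, p.2.2.2, by
      simpa [Nat.lt_succ_iff] using (Finset.mem_range.1 hrange), hne, hps.symm⟩
  · rintro ⟨y, i, j, m, hik, hmj, rfl⟩
    rw [Fam, Finset.mem_image]
    refine ⟨⟨y, i, j, m⟩, ?_, rfl⟩
    rw [Finset.mem_filter, Finset.mem_product]
    refine ⟨⟨Finset.mem_univ _, ?_⟩, hmj⟩
    rw [Finset.mem_product]
    exact ⟨Finset.mem_range.2 (show i < k+1 by omega), by
      rw [Finset.mem_product]; exact ⟨Finset.mem_univ _, Finset.mem_univ _⟩⟩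

-- basic bounds
lemma Ai_pos (i : ℕ) : 0 < Ai i := by simp [Ai]
lemma Ai_le {i : ℕ} (h : i ≤ k) : Ai i ≤ k + 1 := by simp only [Ai]; omega
lemma Bi_lb {i : ℕ} (h : i ≤ k) : k + 2 ≤ Bi k i := by simp only [Bi]; omega
lemma Bi_ub {i : ℕ} (h : i ≤ k) : Bi k i ≤ 2*k + 2 := by simp only [Bi]; omega
lemma Ti_pos {i : ℕ} (h : i ≤ k) : 0 < Ti k i := by simp only [Ti]; omega
lemma Ti_ub {i : ℕ} (h : i ≤ k) : Ti k i ≤ 2*k + 1 := by simp only [Ti]; omega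
lemma Ai_add_Ti {i : ℕ} (h : i ≤ k) : Ai i + Ti k i = Bi k i := by
  simp only [Ai, Bi, Ti]; omega
lemma Ti_inj {i i' : ℕ} (h : i ≤ k) (h' : i' ≤ k) (he : Ti k i = Ti k i') : i = i' := by
  simp only [Ti] at he; omega
lemma Bi_inj {i i' : ℕ} (h : i ≤ k) (h' : i' ≤ k) (he : Bi k i = Bi k i') : i = i' := by
  simp only [Bi] at he; omega

-- cast lemmas
lemma cast_eq_nat {a b : ℕ} (ha : a < 4*k+5) (hb : b < 4*k+5)
    (h : (a : ZMod (4*k+5)) = (b : ZMod (4*k+5))) : a = b := by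
  rw [ZMod.natCast_eq_natCast_iff'] at h
  rwa [Nat.mod_eq_of_lt ha, Nat.mod_eq_of_lt hb] at h

lemma cast_ne_zero {a : ℕ} (h0 : 0 < a) (ha : a < 4*k+5) : (a : ZMod (4*k+5)) ≠ 0 := by
  intro h
  rw [ZMod.natCast_eq_zero_iff] at h
  have := Nat.le_of_dvd h0 h
  omega

lemma add_cast_ne {y : ZMod (4*k+5)} {a : ℕ} (h0 : 0 < a) (ha : a < 4*k+5) :
    y + (a : ZMod (4*k+5)) ≠ y := by
  intro h
  have : (a : ZMod (4*k+5)) = 0 := by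
    have := congrArg (fun z => z - y) h
    simpa [add_comm, add_sub_cancel_right] using this
  exact cast_ne_zero h0 ha this

lemma add_cast_inj {y : ZMod (4*k+5)} {a b : ℕ} (ha : a < 4*k+5) (hb : b < 4*k+5)
    (h : y + (a : ZMod (4*k+5)) = y + (b : ZMod (4*k+5))) : a = b :=
  cast_eq_nat ha hb (by exact add_left_cancel h)

/-- two opposite shifts can't both happen -/
lemma add_cast_opp {y y' : ZMod (4*k+5)} {a b : ℕ} (h0 : 0 < a + b) (hab : a + b < 4*k+5)
    (h1 : y' = y + (a : ZMod (4*k+5))) (h2 : y = y' + (b : ZMod (4*k+5))) : False := by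
  rw [h1, add_assoc] at h2
  have : ((a + b : ℕ) : ZMod (4*k+5)) = 0 := by
    push_cast
    have := congrArg (fun z => z - y) h2.symm
    simpa [add_comm, add_sub_cancel_right, add_assoc] using this
  exact cast_ne_zero h0 hab this

lemma mem_tri {u : ZMod (4*k+5) × ZMod (g+2)} {y i j m} :
    u ∈ tri k g y i j m ↔
      u = (y, j) ∨ u = (y + ((Ti k i : ℕ) : ZMod (4*k+5)), j)
        ∨ u = (y + ((Bi k i : ℕ) : ZMod (4*k+5)), m) := by
  simp [tri]

lemma vtx1_ne_vtx2 {y : ZMod (4*k+5)} {i} {j : ZMod (g+2)} (hik : i ≤ k) :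
    ((y, j) : ZMod (4*k+5) × ZMod (g+2)) ≠ (y + ((Ti k i : ℕ) : ZMod (4*k+5)), j) := by
  intro h
  have h1 : y = y + ((Ti k i : ℕ) : ZMod (4*k+5)) := congrArg Prod.fst h
  exact add_cast_ne (Ti_pos hik) (by have := Ti_ub hik; omega) h1.symm

lemma vtx1_ne_vtx3 {y : ZMod (4*k+5)} {i} {j m : ZMod (g+2)} (hik : i ≤ k) :
    ((y, j) : ZMod (4*k+5) × ZMod (g+2)) ≠ (y + ((Bi k i : ℕ) : ZMod (4*k+5)), m) := by
  intro h
  have h1 : y = y + ((Bi k i : ℕ) : ZMod (4*k+5)) := congrArg Prod.fst h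
  exact add_cast_ne (by have := Bi_lb hik; omega) (by have := Bi_ub hik; omega) h1.symm

lemma vtx2_ne_vtx3 {y : ZMod (4*k+5)} {i} {j m : ZMod (g+2)} (hik : i ≤ k) :
    ((y + ((Ti k i : ℕ) : ZMod (4*k+5)), j) : ZMod (4*k+5) × ZMod (g+2))
      ≠ (y + ((Bi k i : ℕ) : ZMod (4*k+5)), m) := by
  intro h
  have h1 := congrArg Prod.fst h
  simp only at h1
  have := add_cast_inj (k := k) (by have := Ti_ub hik; omega) (by have := Bi_ub hik; omega) h1
  have h2 := Ai_add_Ti hik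
  have h3 := Ai_pos i
  omega

lemma tri_card {y i j m} (hik : i ≤ k) : (tri k g y i j m).card = 3 := by
  rw [tri]
  rw [Finset.card_insert_of_notMem, Finset.card_insert_of_notMem, Finset.card_singleton]
  · simp only [Finset.mem_singleton]
    exact vtx2_ne_vtx3 hik
  · simp only [Finset.mem_insert, Finset.mem_singleton]
    push_neg
    exact ⟨vtx1_ne_vtx2 hik, vtx1_ne_vtx3 hik⟩

/-- distinct vertices of a triple lie in distinct groups -/
lemma fst_inj_tri {u v : ZMod (4*k+5) × ZMod (g+2)} {y i j m} (hik : i ≤ k)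
    (hu : u ∈ tri k g y i j m) (hv : v ∈ tri k g y i j m) (hne : u ≠ v) : u.1 ≠ v.1 := by
  have hT0 := Ti_pos hik
  have hTu := Ti_ub hik
  have hB1 := Bi_lb hik
  have hB2 := Bi_ub hik
  have hAT := Ai_add_Ti hik
  have hA0 := Ai_pos i
  rw [mem_tri] at hu hv
  rcases hu with rfl | rfl | rfl <;> rcases hv with h | h | h <;>
      (try exact absurd h.symm hne) <;> (try exact absurd h rfl) <;> rw [h] <;> intro hfst <;>
      simp only at hfst
  · exact add_cast_ne (by omega) (by omega) hfst.symm
  · exact add_cast_ne (by omega) (by omega) hfst.symm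
  · exact add_cast_ne (by omega) (by omega) hfst
  · have := add_cast_inj (k := k) (by omega) (by omega) hfst
    omega
  · exact add_cast_ne (by omega) (by omega) hfst
  · have := add_cast_inj (k := k) (by omega) (by omega) hfst
    omega

/-- two distinct vertices of a triple with the same index form the spine -/
lemma same_idx_spine {u v : ZMod (4*k+5) × ZMod (g+2)} {y i j m} (hik : i ≤ k)
    (hmj : m ≠ j) (hu : u ∈ tri k g y i j m) (hv : v ∈ tri k g y i j m) (hne : u ≠ v)
    (hidx : u.2 = v.2) :
    (u = (y, j) ∧ v = (y + ((Ti k i : ℕ) : ZMod (4*k+5)), j)) ∨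
      (u = (y + ((Ti k i : ℕ) : ZMod (4*k+5)), j) ∧ v = (y, j)) := by
  rw [mem_tri] at hu hv
  rcases hu with rfl | rfl | rfl <;> rcases hv with h | h | h <;>
    first
      | (exact absurd h.symm hne)
      | (left; exact ⟨rfl, h⟩)
      | (right; exact ⟨rfl, h⟩)
      | (exfalso; rw [h] at hidx; exact hmj (by simpa using hidx.symm))
      | (exfalso; rw [h] at hidx; exact hmj (by simpa using hidx))

/-- in a triple, two vertices with distinct indices: one of them is the page -/
lemma diff_idx_roles {u v : ZMod (4*k+5) × ZMod (g+2)} {y i j m} (hik : i ≤ k)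
    (hmj : m ≠ j) (hu : u ∈ tri k g y i j m) (hv : v ∈ tri k g y i j m)
    (hidx : u.2 ≠ v.2) :
    (u = (y, j) ∧ v = (y + ((Bi k i : ℕ) : ZMod (4*k+5)), m)) ∨
    (u = (y + ((Ti k i : ℕ) : ZMod (4*k+5)), j) ∧ v = (y + ((Bi k i : ℕ) : ZMod (4*k+5)), m)) ∨
    (v = (y, j) ∧ u = (y + ((Bi k i : ℕ) : ZMod (4*k+5)), m)) ∨
    (v = (y + ((Ti k i : ℕ) : ZMod (4*k+5)), j) ∧ u = (y + ((Bi k i : ℕ) : ZMod (4*k+5)), m)) := by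
  rw [mem_tri] at hu hv
  rcases hu with rfl | rfl | rfl <;> rcases hv with h | h | h <;>
    first
      | (exfalso; apply hidx; rw [h]; done)
      | (left; exact ⟨rfl, h⟩)
      | (right; left; exact ⟨rfl, h⟩)
      | (right; right; left; exact ⟨h, rfl⟩)
      | (right; right; right; exact ⟨h, rfl⟩)

/-- key uniqueness: a pair of vertices with distinct indices lies in at most one triple -/
lemma add_cast_inj3 {y : ZMod (4*k+5)} {a b c : ℕ}
    (h : y + (a : ZMod (4*k+5)) + (b : ZMod (4*k+5)) = y + (c : ZMod (4*k+5)))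
    (hab : a + b < 4*k+5) (hc : c < 4*k+5) :
    a + b = c := by
  rw [add_assoc, ← Nat.cast_add] at h
  exact add_cast_inj hab hc h

lemma diff_idx_unique {u v : ZMod (4*k+5) × ZMod (g+2)} {y i j m y' i' j' m'}
    (hik : i ≤ k) (hmj : m ≠ j) (hik' : i' ≤ k) (hmj' : m' ≠ j')
    (hu : u ∈ tri k g y i j m) (hv : v ∈ tri k g y i j m)
    (hu' : u ∈ tri k g y' i' j' m') (hv' : v ∈ tri k g y' i' j' m')
    (hidx : u.2 ≠ v.2) : tri k g y i j m = tri k g y' i' j' m' := by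
  have hT0 := Ti_pos hik
  have hTu := Ti_ub hik
  have hB1 := Bi_lb hik
  have hB2 := Bi_ub hik
  have hAT := Ai_add_Ti hik
  have hA0 := Ai_pos i
  have hT0' := Ti_pos hik'
  have hTu' := Ti_ub hik'
  have hB1' := Bi_lb hik'
  have hB2' := Bi_ub hik'
  have hAT' := Ai_add_Ti hik'
  have hA0' := Ai_pos i'
  have hAi : Ai i = i + 1 := rfl
  have hAi' : Ai i' = i' + 1 := rfl
  have key : y = y' ∧ i = i' ∧ j = j' ∧ m = m' := by
    rcases diff_idx_roles hik hmj hu hv hidx with ⟨h1, h2⟩ | ⟨h1, h2⟩ | ⟨h1, h2⟩ | ⟨h1, h2⟩ <;>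
      rcases diff_idx_roles hik' hmj' hu' hv' hidx with ⟨h1', h2'⟩ | ⟨h1', h2'⟩ | ⟨h1', h2'⟩ | ⟨h1', h2'⟩
    -- (L,L)
    · rw [h1] at h1'; rw [h2] at h2'
      simp only [Prod.mk.injEq] at h1' h2'
      obtain ⟨rfl, rfl⟩ := h1'
      have hBB := add_cast_inj (k := k) (by omega) (by omega) h2'.1
      have : i = i' := Bi_inj hik hik' hBB
      exact ⟨rfl, this, rfl, h2'.2⟩
    -- (L,R)
    · rw [h1] at h1'; rw [h2] at h2'
      simp only [Prod.mk.injEq] at h1' h2'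
      rw [h1'.1] at h2'
      have htmp := h2'.1
      have := add_cast_inj3 htmp (by omega) (by omega)
      omega
    -- (L,L')
    · rw [h1] at h2'; rw [h2] at h1'
      simp only [Prod.mk.injEq] at h1' h2'
      exact (add_cast_opp (by omega) (by omega) h1'.1.symm h2'.1).elim
    -- (L,R')
    · rw [h1] at h2'; rw [h2] at h1'
      simp only [Prod.mk.injEq] at h1' h2'
      rw [h2'.1] at h1'
      have htmp := h1'.1
      have := add_cast_inj3 htmp (by omega) (by omega)
      omega
    -- (R,L)
    · rw [h1] at h1'; rw [h2] at h2'
      simp only [Prod.mk.injEq] at h1' h2'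
      rw [← h1'.1] at h2'
      have htmp := h2'.1.symm
      have := add_cast_inj3 htmp (by omega) (by omega)
      omega
    -- (R,R)
    · rw [h1] at h1'; rw [h2] at h2'
      simp only [Prod.mk.injEq] at h1' h2'
      have e2 : y + ((Bi k i : ℕ) : ZMod (4*k+5)) + ((Ti k i' : ℕ) : ZMod (4*k+5))
          = y + ((Ti k i : ℕ) : ZMod (4*k+5)) + ((Bi k i' : ℕ) : ZMod (4*k+5)) := by
        rw [h2'.1, h1'.1]
        ring
      rw [add_assoc, add_assoc, ← Nat.cast_add, ← Nat.cast_add] at e2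
      have e3 := add_cast_inj (k := k) (by omega) (by omega) e2
      have hii : i = i' := by omega
      subst hii
      have hyy : y = y' := by
        have := h1'.1
        exact add_right_cancel this
      exact ⟨hyy, rfl, h1'.2, h2'.2⟩
    -- (R,L')
    · rw [h1] at h2'; rw [h2] at h1'
      simp only [Prod.mk.injEq] at h1' h2'
      rw [← h1'.1] at h2'
      have htmp := h2'.1.symm
      have := add_cast_inj3 htmp (by omega) (by omega)
      omega
    -- (R,R')
    · rw [h1] at h2'; rw [h2] at h1'
      simp only [Prod.mk.injEq] at h1' h2'
      -- h1' : y + B = y' + T' , h2' : y + T = y' + B'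
      have e2 : y + ((Bi k i : ℕ) : ZMod (4*k+5)) + ((Bi k i' : ℕ) : ZMod (4*k+5))
          = y + ((Ti k i : ℕ) : ZMod (4*k+5)) + ((Ti k i' : ℕ) : ZMod (4*k+5)) := by
        rw [h2'.1, h1'.1]
        ring
      rw [add_assoc, add_assoc, ← Nat.cast_add, ← Nat.cast_add] at e2
      have e3 := add_cast_inj (k := k) (by omega) (by omega) e2
      omega
    -- (L',L)
    · rw [h1] at h2'; rw [h2] at h1'
      simp only [Prod.mk.injEq] at h1' h2'
      exact (add_cast_opp (by omega) (by omega) h1'.1.symm h2'.1).elim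
    -- (L',R)
    · rw [h1] at h2'; rw [h2] at h1'
      simp only [Prod.mk.injEq] at h1' h2'
      rw [h2'.1] at h1'
      have htmp := h1'.1
      have := add_cast_inj3 htmp (by omega) (by omega)
      omega
    -- (L',L')
    · rw [h1] at h1'; rw [h2] at h2'
      simp only [Prod.mk.injEq] at h1' h2'
      obtain ⟨rfl, rfl⟩ := h1'
      have hBB := add_cast_inj (k := k) (by omega) (by omega) h2'.1
      have : i = i' := Bi_inj hik hik' hBB
      exact ⟨rfl, this, rfl, h2'.2⟩
    -- (L',R')
    · rw [h1] at h1'; rw [h2] at h2'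
      simp only [Prod.mk.injEq] at h1' h2'
      rw [h1'.1] at h2'
      have htmp := h2'.1
      have := add_cast_inj3 htmp (by omega) (by omega)
      omega
    -- (R',L)
    · rw [h1] at h2'; rw [h2] at h1'
      simp only [Prod.mk.injEq] at h1' h2'
      rw [← h1'.1] at h2'
      have htmp := h2'.1.symm
      have := add_cast_inj3 htmp (by omega) (by omega)
      omega
    -- (R',R)
    · rw [h1] at h2'; rw [h2] at h1'
      simp only [Prod.mk.injEq] at h1' h2'
      have e2 : y + ((Bi k i : ℕ) : ZMod (4*k+5)) + ((Bi k i' : ℕ) : ZMod (4*k+5))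
          = y + ((Ti k i : ℕ) : ZMod (4*k+5)) + ((Ti k i' : ℕ) : ZMod (4*k+5)) := by
        rw [h1'.1, h2'.1]
        ring
      rw [add_assoc, add_assoc, ← Nat.cast_add, ← Nat.cast_add] at e2
      have e3 := add_cast_inj (k := k) (by omega) (by omega) e2
      omega
    -- (R',L')
    · rw [h1] at h1'; rw [h2] at h2'
      simp only [Prod.mk.injEq] at h1' h2'
      rw [← h1'.1] at h2'
      have htmp := h2'.1.symm
      have := add_cast_inj3 htmp (by omega) (by omega)
      omega
    -- (R',R')
    · rw [h1] at h1'; rw [h2] at h2'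
      simp only [Prod.mk.injEq] at h1' h2'
      have e2 : y + ((Bi k i : ℕ) : ZMod (4*k+5)) + ((Ti k i' : ℕ) : ZMod (4*k+5))
          = y + ((Ti k i : ℕ) : ZMod (4*k+5)) + ((Bi k i' : ℕ) : ZMod (4*k+5)) := by
        rw [h2'.1, h1'.1]
        ring
      rw [add_assoc, add_assoc, ← Nat.cast_add, ← Nat.cast_add] at e2
      have e3 := add_cast_inj (k := k) (by omega) (by omega) e2
      have hii : i = i' := by omega
      subst hii
      have hyy : y = y' := add_right_cancel h1'.1
      exact ⟨hyy, rfl, h1'.2, h2'.2⟩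
  obtain ⟨rfl, rfl, rfl, rfl⟩ := key
  rfl

lemma spine_eq {y y' : ZMod (4*k+5)} {i i' : ℕ} {j j' m' : ZMod (g+2)}
    (hik : i ≤ k) (hik' : i' ≤ k) (hmj' : m' ≠ j')
    (h1 : ((y, j) : ZMod (4*k+5) × ZMod (g+2)) ∈ tri k g y' i' j' m')
    (h2 : ((y + ((Ti k i : ℕ) : ZMod (4*k+5)), j) : ZMod (4*k+5) × ZMod (g+2))
        ∈ tri k g y' i' j' m') :
    y = y' ∧ i = i' ∧ j = j' := by
  have hT0 := Ti_pos hik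
  have hTu := Ti_ub hik
  have hT0' := Ti_pos hik'
  have hTu' := Ti_ub hik'
  rcases same_idx_spine hik' hmj' h1 h2 (vtx1_ne_vtx2 hik) rfl with ⟨e1, e2⟩ | ⟨e1, e2⟩
  · simp only [Prod.mk.injEq] at e1 e2
    obtain ⟨rfl, rfl⟩ := e1
    have := add_cast_inj (k := k) (by omega) (by omega) e2.1
    exact ⟨rfl, Ti_inj hik hik' this, rfl⟩
  · simp only [Prod.mk.injEq] at e1 e2
    exact (add_cast_opp (by omega) (by omega) e1.1 e2.1.symm).elim

lemma page_eq {y : ZMod (4*k+5)} {i : ℕ} {j m m' : ZMod (g+2)} (hik : i ≤ k)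
    (h : ((y + ((Bi k i : ℕ) : ZMod (4*k+5)), m) : ZMod (4*k+5) × ZMod (g+2))
        ∈ tri k g y i j m') : m = m' := by
  have hT0 := Ti_pos hik
  have hTu := Ti_ub hik
  have hB1 := Bi_lb hik
  have hB2 := Bi_ub hik
  have hAT := Ai_add_Ti hik
  have hA0 := Ai_pos i
  rw [mem_tri] at h
  rcases h with h | h | h
  · exact absurd (congrArg Prod.fst h) (add_cast_ne (by omega) (by omega))
  · have := congrArg Prod.fst h
    simp only at this
    have := add_cast_inj (k := k) (by omega) (by omega) this
    omega
  · exact congrArg Prod.snd h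

lemma tri_param_eq {y y' : ZMod (4*k+5)} {i i' : ℕ} {j j' m m' : ZMod (g+2)}
    (hik : i ≤ k) (hik' : i' ≤ k) (hmj' : m' ≠ j')
    (heq : tri k g y i j m = tri k g y' i' j' m') :
    y = y' ∧ i = i' ∧ j = j' ∧ m = m' := by
  have h1 : ((y, j) : ZMod (4*k+5) × ZMod (g+2)) ∈ tri k g y' i' j' m' := by
    rw [← heq, mem_tri]; left; rfl
  have h2 : ((y + ((Ti k i : ℕ) : ZMod (4*k+5)), j) : ZMod (4*k+5) × ZMod (g+2))
      ∈ tri k g y' i' j' m' := by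
    rw [← heq, mem_tri]; right; left; rfl
  obtain ⟨hy, hi, hj⟩ := spine_eq hik hik' hmj' h1 h2
  subst hy; subst hi; subst hj
  have h3 : ((y + ((Bi k i : ℕ) : ZMod (4*k+5)), m) : ZMod (4*k+5) × ZMod (g+2))
      ∈ tri k g y i j m' := by
    rw [← heq, mem_tri]; right; right; rfl
  exact ⟨rfl, rfl, rfl, page_eq hik h3⟩

/-- distinct members of the family sharing two vertices: the two vertices have equal index -/
lemma shared_pair_idx {s₁ s₂ : Finset (ZMod (4*k+5) × ZMod (g+2))}
    (h₁ : s₁ ∈ Fam k g) (h₂ : s₂ ∈ Fam k g) (hne : s₁ ≠ s₂)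
    {u v : ZMod (4*k+5) × ZMod (g+2)}
    (hu₁ : u ∈ s₁) (hv₁ : v ∈ s₁) (hu₂ : u ∈ s₂) (hv₂ : v ∈ s₂) : u.2 = v.2 := by
  by_contra hidx
  obtain ⟨y, i, j, m, hik, hmj, rfl⟩ := mem_Fam.1 h₁
  obtain ⟨y', i', j', m', hik', hmj', rfl⟩ := mem_Fam.1 h₂
  exact hne (diff_idx_unique hik hmj hik' hmj' hu₁ hv₁ hu₂ hv₂ hidx)

lemma Fam_triple_system : isTripleSystem (Fam k g) := by
  intro t ht
  obtain ⟨y, i, j, m, hik, hmj, rfl⟩ := mem_Fam.1 ht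
  exact tri_card hik

lemma Fam_C_free : ¬ containsConfig (Fam k g) configC := by
  rintro ⟨f, hfinj, hf⟩
  have d01 : f 0 ≠ f 1 := fun h => absurd (hfinj h) (by decide)
  have d02 : f 0 ≠ f 2 := fun h => absurd (hfinj h) (by decide)
  have d12 : f 1 ≠ f 2 := fun h => absurd (hfinj h) (by decide)
  have d13 : f 1 ≠ f 3 := fun h => absurd (hfinj h) (by decide)
  have h1 : ({f 0, f 1, f 3} : Finset (ZMod (4*k+5) × ZMod (g+2))) ∈ Fam k g := by
    have := hf {0,1,3} (by simp [configC]); rwa [image_triple] at this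
  have h2 : ({f 0, f 2, f 3} : Finset (ZMod (4*k+5) × ZMod (g+2))) ∈ Fam k g := by
    have := hf {0,2,3} (by simp [configC]); rwa [image_triple] at this
  have h3 : ({f 1, f 2, f 3} : Finset (ZMod (4*k+5) × ZMod (g+2))) ∈ Fam k g := by
    have := hf {1,2,3} (by simp [configC]); rwa [image_triple] at this
  have hne12 : ({f 0, f 1, f 3} : Finset (ZMod (4*k+5) × ZMod (g+2))) ≠ {f 0, f 2, f 3} := by
    intro h
    have : f 1 ∈ ({f 0, f 2, f 3} : Finset (ZMod (4*k+5) × ZMod (g+2))) := by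
      rw [← h]; simp
    simp only [Finset.mem_insert, Finset.mem_singleton] at this
    tauto
  have hne13 : ({f 0, f 1, f 3} : Finset (ZMod (4*k+5) × ZMod (g+2))) ≠ {f 1, f 2, f 3} := by
    intro h
    have : f 0 ∈ ({f 1, f 2, f 3} : Finset (ZMod (4*k+5) × ZMod (g+2))) := by
      rw [← h]; simp
    simp only [Finset.mem_insert, Finset.mem_singleton] at this
    have d03 : f 0 ≠ f 3 := fun h => absurd (hfinj h) (by decide)
    tauto
  have idx03 : (f 0).2 = (f 3).2 :=
    shared_pair_idx h1 h2 hne12 (by simp) (by simp) (by simp) (by simp)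
  have idx13 : (f 1).2 = (f 3).2 :=
    shared_pair_idx h1 h3 hne13 (by simp) (by simp) (by simp) (by simp)
  -- but a triple has a vertex of different index
  obtain ⟨y, i, j, m, hik, hmj, heq⟩ := mem_Fam.1 h1
  have hall : ∀ w ∈ (tri k g y i j m), w.2 = (f 3).2 := by
    intro w hw
    rw [← heq] at hw
    simp only [Finset.mem_insert, Finset.mem_singleton] at hw
    rcases hw with rfl | rfl | rfl
    · exact idx03
    · exact idx13
    · rfl
  have hj : j = (f 3).2 := hall (y, j) (by rw [mem_tri]; left; rfl)
  have hm : m = (f 3).2 := hall (y + ((Bi k i : ℕ) : ZMod (4*k+5)), m)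
    (by rw [mem_tri]; right; right; rfl)
  exact hmj (by rw [hj, hm])

lemma Fam_D_free : ¬ containsConfig (Fam k g) configD := by
  rintro ⟨f, hfinj, hf⟩
  have d01 : f 0 ≠ f 1 := fun h => absurd (hfinj h) (by decide)
  have d02 : f 0 ≠ f 2 := fun h => absurd (hfinj h) (by decide)
  have d03 : f 0 ≠ f 3 := fun h => absurd (hfinj h) (by decide)
  have d04 : f 0 ≠ f 4 := fun h => absurd (hfinj h) (by decide)
  have d12 : f 1 ≠ f 2 := fun h => absurd (hfinj h) (by decide)
  have d13 : f 1 ≠ f 3 := fun h => absurd (hfinj h) (by decide)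
  have d14 : f 1 ≠ f 4 := fun h => absurd (hfinj h) (by decide)
  have h1 : ({f 0, f 1, f 2} : Finset (ZMod (4*k+5) × ZMod (g+2))) ∈ Fam k g := by
    have := hf {0,1,2} (by simp [configD]); rwa [image_triple] at this
  have h2 : ({f 0, f 2, f 3} : Finset (ZMod (4*k+5) × ZMod (g+2))) ∈ Fam k g := by
    have := hf {0,2,3} (by simp [configD]); rwa [image_triple] at this
  have h3 : ({f 1, f 2, f 4} : Finset (ZMod (4*k+5) × ZMod (g+2))) ∈ Fam k g := by
    have := hf {1,2,4} (by simp [configD]); rwa [image_triple] at this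
  have hne12 : ({f 0, f 1, f 2} : Finset (ZMod (4*k+5) × ZMod (g+2))) ≠ {f 0, f 2, f 3} := by
    intro h
    have : f 1 ∈ ({f 0, f 2, f 3} : Finset (ZMod (4*k+5) × ZMod (g+2))) := by
      rw [← h]; simp
    simp only [Finset.mem_insert, Finset.mem_singleton] at this
    tauto
  have hne13 : ({f 0, f 1, f 2} : Finset (ZMod (4*k+5) × ZMod (g+2))) ≠ {f 1, f 2, f 4} := by
    intro h
    have : f 0 ∈ ({f 1, f 2, f 4} : Finset (ZMod (4*k+5) × ZMod (g+2))) := by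
      rw [← h]; simp
    simp only [Finset.mem_insert, Finset.mem_singleton] at this
    tauto
  have idx02 : (f 0).2 = (f 2).2 :=
    shared_pair_idx h1 h2 hne12 (by simp) (by simp) (by simp) (by simp)
  have idx12 : (f 1).2 = (f 2).2 :=
    shared_pair_idx h1 h3 hne13 (by simp) (by simp) (by simp) (by simp)
  obtain ⟨y, i, j, m, hik, hmj, heq⟩ := mem_Fam.1 h1
  have hall : ∀ w ∈ (tri k g y i j m), w.2 = (f 2).2 := by
    intro w hw
    rw [← heq] at hw
    simp only [Finset.mem_insert, Finset.mem_singleton] at hw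
    rcases hw with rfl | rfl | rfl
    · exact idx02
    · exact idx12
    · rfl
  have hj : j = (f 2).2 := hall (y, j) (by rw [mem_tri]; left; rfl)
  have hm : m = (f 2).2 := hall (y + ((Bi k i : ℕ) : ZMod (4*k+5)), m)
    (by rw [mem_tri]; right; right; rfl)
  exact hmj (by rw [hj, hm])

lemma Fam_B_free : ¬ containsConfig (Fam k g) configB := by
  rintro ⟨f, hfinj, hf⟩
  have d01 : f 0 ≠ f 1 := fun h => absurd (hfinj h) (by decide)
  have d02 : f 0 ≠ f 2 := fun h => absurd (hfinj h) (by decide)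
  have d03 : f 0 ≠ f 3 := fun h => absurd (hfinj h) (by decide)
  have d12 : f 1 ≠ f 2 := fun h => absurd (hfinj h) (by decide)
  have d13 : f 1 ≠ f 3 := fun h => absurd (hfinj h) (by decide)
  have d23 : f 2 ≠ f 3 := fun h => absurd (hfinj h) (by decide)
  have h3 : ({f 0, f 1, f 4} : Finset (ZMod (4*k+5) × ZMod (g+2))) ∈ Fam k g := by
    have := hf {0,1,4} (by simp [configB]); rwa [image_triple] at this
  have h1 : ({f 0, f 2, f 3} : Finset (ZMod (4*k+5) × ZMod (g+2))) ∈ Fam k g := by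
    have := hf {0,2,3} (by simp [configB]); rwa [image_triple] at this
  have h2 : ({f 1, f 2, f 3} : Finset (ZMod (4*k+5) × ZMod (g+2))) ∈ Fam k g := by
    have := hf {1,2,3} (by simp [configB]); rwa [image_triple] at this
  have hne12 : ({f 0, f 2, f 3} : Finset (ZMod (4*k+5) × ZMod (g+2))) ≠ {f 1, f 2, f 3} := by
    intro h
    have : f 0 ∈ ({f 1, f 2, f 3} : Finset (ZMod (4*k+5) × ZMod (g+2))) := by
      rw [← h]; simp
    simp only [Finset.mem_insert, Finset.mem_singleton] at this
    tauto
  have idx23 : (f 2).2 = (f 3).2 :=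
    shared_pair_idx h1 h2 hne12 (by simp) (by simp) (by simp) (by simp)
  obtain ⟨y, i, j, m, hik, hmj, heq⟩ := mem_Fam.1 h1
  obtain ⟨y', i', j', m', hik', hmj', heq'⟩ := mem_Fam.1 h2
  have hf2s1 : f 2 ∈ tri k g y i j m := by rw [← heq]; simp
  have hf3s1 : f 3 ∈ tri k g y i j m := by rw [← heq]; simp
  have hf2s2 : f 2 ∈ tri k g y' i' j' m' := by rw [← heq']; simp
  have hf3s2 : f 3 ∈ tri k g y' i' j' m' := by rw [← heq']; simp
  have hf0s1 : f 0 ∈ tri k g y i j m := by rw [← heq]; simp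
  have hf1s2 : f 1 ∈ tri k g y' i' j' m' := by rw [← heq']; simp
  -- f2, f3 form the spine of both triples
  have hsp1 := same_idx_spine hik hmj hf2s1 hf3s1 d23 idx23
  have hsp2 := same_idx_spine hik' hmj' hf2s2 hf3s2 d23 idx23
  -- spine vertices belong to both triples; conclude parameters agree
  have hv1 : ((y, j) : ZMod (4*k+5) × ZMod (g+2)) ∈ tri k g y' i' j' m' := by
    rcases hsp1 with ⟨e1, e2⟩ | ⟨e1, e2⟩
    · rw [← e1]; exact hf2s2
    · rw [← e2]; exact hf3s2
  have hv2 : ((y + ((Ti k i : ℕ) : ZMod (4*k+5)), j) : ZMod (4*k+5) × ZMod (g+2))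
      ∈ tri k g y' i' j' m' := by
    rcases hsp1 with ⟨e1, e2⟩ | ⟨e1, e2⟩
    · rw [← e2]; exact hf3s2
    · rw [← e1]; exact hf2s2
  obtain ⟨hy, hi, hj⟩ := spine_eq hik hik' hmj' hv1 hv2
  subst hy; subst hi; subst hj
  -- f 0 is the page of the first triple
  have hpage0 : f 0 = (y + ((Bi k i : ℕ) : ZMod (4*k+5)), m) := by
    rw [mem_tri] at hf0s1
    rcases hf0s1 with h | h | h
    · exfalso
      rcases hsp1 with ⟨e1, e2⟩ | ⟨e1, e2⟩
      · exact d02 (h.trans e1.symm)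
      · exact d03 (h.trans e2.symm)
    · exfalso
      rcases hsp1 with ⟨e1, e2⟩ | ⟨e1, e2⟩
      · exact d03 (h.trans e2.symm)
      · exact d02 (h.trans e1.symm)
    · exact h
  have hpage1 : f 1 = (y + ((Bi k i : ℕ) : ZMod (4*k+5)), m') := by
    rw [mem_tri] at hf1s2
    rcases hf1s2 with h | h | h
    · exfalso
      rcases hsp2 with ⟨e1, e2⟩ | ⟨e1, e2⟩
      · exact d12 (h.trans e1.symm)
      · exact d13 (h.trans e2.symm)
    · exfalso
      rcases hsp2 with ⟨e1, e2⟩ | ⟨e1, e2⟩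
      · exact d13 (h.trans e2.symm)
      · exact d12 (h.trans e1.symm)
    · exact h
  -- but then f 0 and f 1 are distinct vertices of the third triple in the same group
  obtain ⟨y₃, i₃, j₃, m₃, hik₃, hmj₃, heq₃⟩ := mem_Fam.1 h3
  have hf0s3 : f 0 ∈ tri k g y₃ i₃ j₃ m₃ := by rw [← heq₃]; simp
  have hf1s3 : f 1 ∈ tri k g y₃ i₃ j₃ m₃ := by rw [← heq₃]; simp
  have := fst_inj_tri hik₃ hf0s3 hf1s3 d01
  rw [hpage0, hpage1] at this
  exact this rfl

lemma Fam_card : (Fam k g).card = (4*k+5) * ((k+1) * ((g+2) * (g+1))) := by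
  classical
  rw [Fam]
  rw [Finset.card_image_of_injOn]
  · -- cardinality of the parameter set
    have hset : (((Finset.univ : Finset (ZMod (4*k+5))) ×ˢ (Finset.range (k+1) ×ˢ
        ((Finset.univ : Finset (ZMod (g+2))) ×ˢ (Finset.univ : Finset (ZMod (g+2)))))).filter
          (fun p => p.2.2.2 ≠ p.2.2.1))
        = (Finset.univ : Finset (ZMod (4*k+5))) ×ˢ (Finset.range (k+1) ×ˢ
          (((Finset.univ : Finset (ZMod (g+2))) ×ˢ (Finset.univ : Finset (ZMod (g+2)))).filter
            (fun q => q.2 ≠ q.1))) := by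
      ext p
      simp only [Finset.mem_filter, Finset.mem_product, Finset.mem_univ, true_and]
      tauto
    rw [hset]
    rw [Finset.card_product, Finset.card_product]
    have hN : (Finset.univ : Finset (ZMod (4*k+5))).card = 4*k+5 := by
      rw [Finset.card_univ, ZMod.card]
    have hD : (((Finset.univ : Finset (ZMod (g+2))) ×ˢ (Finset.univ : Finset (ZMod (g+2)))).filter
        (fun q => q.2 ≠ q.1)).card = (g+2) * (g+1) := by
      have htot := Finset.card_filter_add_card_filter_not
        (s := (Finset.univ : Finset (ZMod (g+2))) ×ˢ (Finset.univ : Finset (ZMod (g+2))))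
        (p := fun q => q.2 = q.1)
      have htotcard : ((Finset.univ : Finset (ZMod (g+2))) ×ˢ
          (Finset.univ : Finset (ZMod (g+2)))).card = (g+2) * (g+2) := by
        rw [Finset.card_product, Finset.card_univ, ZMod.card]
      have hdiag : (((Finset.univ : Finset (ZMod (g+2))) ×ˢ
          (Finset.univ : Finset (ZMod (g+2)))).filter (fun q => q.2 = q.1)).card = g+2 := by
        have himg : (((Finset.univ : Finset (ZMod (g+2))) ×ˢ
            (Finset.univ : Finset (ZMod (g+2)))).filter (fun q => q.2 = q.1))
            = (Finset.univ : Finset (ZMod (g+2))).image (fun j => (j, j)) := by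
          ext q
          simp only [Finset.mem_filter, Finset.mem_product, Finset.mem_univ, true_and,
            Finset.mem_image]
          constructor
          · intro h
            exact ⟨q.1, by rw [Prod.ext_iff]; exact ⟨rfl, h.symm⟩⟩
          · rintro ⟨a, rfl⟩
            rfl
        rw [himg, Finset.card_image_of_injective _ (fun a b h => (Prod.mk.injEq .. ▸ h).1),
          Finset.card_univ, ZMod.card]
      have hexp : (g+2) * (g+2) = (g+2)*(g+1) + (g+2) := by ring
      have hfilterne : (Finset.filter (fun q => ¬ q.2 = q.1)
          ((Finset.univ : Finset (ZMod (g+2))) ×ˢ (Finset.univ : Finset (ZMod (g+2))))).card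
          = (g+2) * (g+1) := by omega
      convert hfilterne using 2
    rw [hN, Finset.card_range, hD]
  · -- injectivity on the parameter set
    intro p hp q hq heq
    simp only [Finset.coe_filter, Finset.mem_product, Set.mem_setOf_eq, Finset.mem_range,
      Finset.mem_univ, true_and] at hp hq
    obtain ⟨⟨hpik, -⟩, hpmj⟩ := hp
    obtain ⟨⟨hqik, -⟩, hqmj⟩ := hq
    obtain ⟨hy, hi, hj, hm⟩ := tri_param_eq (by omega) (by omega) hqmj heq
    obtain ⟨p1, p2, p3, p4⟩ := p
    obtain ⟨q1, q2, q3, q4⟩ := q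
    simp only at hy hi hj hm
    simp [hy, hi, hj, hm]

end Construction



-- ==================== transport and final theorem ====================

section Transport

variable {V W : Type*} [DecidableEq V] [DecidableEq W]

lemma contains_of_image {m : ℕ} {F : Finset (Finset V)} {pat : List (Finset (Fin m))}
    (hcov : ∀ i : Fin m, ∃ t ∈ pat, i ∈ t) {ι : V → W} (hι : Function.Injective ι)
    (h : containsConfig (F.image (fun s => s.image ι)) pat) : containsConfig F pat := by
  obtain ⟨f, hfinj, hf⟩ := h
  have hrange : ∀ i : Fin m, ∃ x : V, ι x = f i := by
    intro i
    obtain ⟨t, htp, hit⟩ := hcov i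
    have h1 := hf t htp
    rw [Finset.mem_image] at h1
    obtain ⟨s, hs, hseq⟩ := h1
    have h2 : f i ∈ t.image f := Finset.mem_image_of_mem f hit
    rw [← hseq, Finset.mem_image] at h2
    obtain ⟨x, hx, hxeq⟩ := h2
    exact ⟨x, hxeq⟩
  choose f0 hf0 using hrange
  refine ⟨f0, ?_, ?_⟩
  · intro a b hab
    apply hfinj
    rw [← hf0 a, ← hf0 b, hab]
  · intro t htp
    have h2 := hf t htp
    rw [Finset.mem_image] at h2
    obtain ⟨s, hs, hseq⟩ := h2
    have h3 : (t.image f0).image ι = s.image ι := by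
      rw [Finset.image_image]
      have h4 : t.image (ι ∘ f0) = t.image f :=
        Finset.image_congr (fun i _ => hf0 i)
      rw [h4]
      exact hseq.symm
    have := Finset.image_injective hι h3
    rwa [this]

end Transport

lemma covB : ∀ i : Fin 5, ∃ t ∈ configB, i ∈ t := by decide
lemma covC : ∀ i : Fin 4, ∃ t ∈ configC, i ∈ t := by decide
lemma covD : ∀ i : Fin 5, ∃ t ∈ configD, i ∈ t := by decide

lemma exists_good_family (n k g : ℕ) (h : (4*k+5)*(g+2) ≤ n) :
    ∃ F : Finset (Finset (Fin n)), isTripleSystem F ∧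
      ¬ containsConfig F configB ∧ ¬ containsConfig F configC ∧
      ¬ containsConfig F configD ∧ F.card = (4*k+5) * ((k+1) * ((g+2) * (g+1))) := by
  classical
  have hcard : Fintype.card (ZMod (4*k+5) × ZMod (g+2)) ≤ Fintype.card (Fin n) := by
    rw [Fintype.card_prod, ZMod.card, ZMod.card, Fintype.card_fin]
    exact h
  obtain ⟨ι⟩ := Function.Embedding.nonempty_of_card_le hcard
  have hι : Function.Injective ι := ι.injective
  refine ⟨(Fam k g).image (fun s => s.image (ι : ZMod (4*k+5) × ZMod (g+2) → Fin n)),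
    ?_, ?_, ?_, ?_, ?_⟩
  · intro t ht
    rw [Finset.mem_image] at ht
    obtain ⟨s, hs, rfl⟩ := ht
    rw [Finset.card_image_of_injective _ hι]
    exact Fam_triple_system s hs
  · exact fun hcontains => Fam_B_free (contains_of_image covB hι hcontains)
  · exact fun hcontains => Fam_C_free (contains_of_image covC hι hcontains)
  · exact fun hcontains => Fam_D_free (contains_of_image covD hι hcontains)
  · rw [Finset.card_image_of_injective _ (Finset.image_injective hι)]
    exact Fam_card

lemma exBCD_mem (n : ℕ) : ∃ F : Finset (Finset (Fin n)), isTripleSystem F ∧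
    ¬ containsConfig F configB ∧ ¬ containsConfig F configC ∧
    ¬ containsConfig F configD ∧ F.card = exBCD n := by
  have hne : ({k : ℕ | ∃ F : Finset (Finset (Fin n)), isTripleSystem F ∧
      ¬ containsConfig F configB ∧ ¬ containsConfig F configC ∧
      ¬ containsConfig F configD ∧ F.card = k}).Nonempty := by
    refine ⟨0, ∅, ?_, ?_, ?_, ?_, rfl⟩
    · intro t ht; simp at ht
    · rintro ⟨f, -, hf⟩
      have := hf {0,1,4} (by simp [configB])
      simp at this
    · rintro ⟨f, -, hf⟩
      have := hf {0,1,3} (by simp [configC])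
      simp at this
    · rintro ⟨f, -, hf⟩
      have := hf {0,1,2} (by simp [configD])
      simp at this
  have hbdd : BddAbove {k : ℕ | ∃ F : Finset (Finset (Fin n)), isTripleSystem F ∧
      ¬ containsConfig F configB ∧ ¬ containsConfig F configC ∧
      ¬ containsConfig F configD ∧ F.card = k} := by
    refine ⟨2 ^ n, ?_⟩
    rintro kk ⟨F, -, -, -, -, rfl⟩
    calc F.card ≤ (Finset.univ : Finset (Finset (Fin n))).card := Finset.card_le_univ F
      _ = 2 ^ n := by rw [Finset.card_univ, Fintype.card_finset, Fintype.card_fin]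
  have := Nat.sSup_mem hne hbdd
  exact this

lemma exBCD_ge (n k g : ℕ) (h : (4*k+5)*(g+2) ≤ n) :
    (4*k+5) * ((k+1) * ((g+2) * (g+1))) ≤ exBCD n := by
  obtain ⟨F, h1, h2, h3, h4, h5⟩ := exists_good_family n k g h
  have hbdd : BddAbove {k : ℕ | ∃ F : Finset (Finset (Fin n)), isTripleSystem F ∧
      ¬ containsConfig F configB ∧ ¬ containsConfig F configC ∧
      ¬ containsConfig F configD ∧ F.card = k} := by
    refine ⟨2 ^ n, ?_⟩
    rintro kk ⟨F, -, -, -, -, rfl⟩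
    calc F.card ≤ (Finset.univ : Finset (Finset (Fin n))).card := Finset.card_le_univ F
      _ = 2 ^ n := by rw [Finset.card_univ, Fintype.card_finset, Fintype.card_fin]
  exact le_csSup hbdd ⟨F, h1, h2, h3, h4, h5⟩

lemma exBCD_upper (n : ℕ) : (exBCD n : ℝ) ≤ 1 / 4 * (n : ℝ) ^ 2 := by
  obtain ⟨F, h1, h2, h3, h4, h5⟩ := exBCD_mem n
  rw [← h5]
  exact upper_real F h1 h3 h4

/-- ex(n, BCD) = (1/4)·n²·(1 − o(1)): for every ε > 0, eventually
(1/4 − ε)n² ≤ ex(n, BCD) ≤ (1/4)n². -/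
theorem ex_BCD_asymptotic :
    ∀ ε : ℝ, 0 < ε → ∃ n₀ : ℕ, ∀ n : ℕ, n₀ ≤ n →
      (1 / 4 - ε) * (n : ℝ) ^ 2 ≤ (exBCD n : ℝ) ∧
      (exBCD n : ℝ) ≤ (1 / 4) * (n : ℝ) ^ 2 := by
  intro ε hε
  by_cases hbig : (1/4 : ℝ) ≤ ε
  · refine ⟨1, fun n _ => ⟨?_, exBCD_upper n⟩⟩
    have h1 : (1/4 - ε : ℝ) ≤ 0 := by linarith
    have h2 : (0:ℝ) ≤ (exBCD n : ℝ) := Nat.cast_nonneg _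
    nlinarith [sq_nonneg ((n:ℝ))]
  · push_neg at hbig
    obtain ⟨k, hk⟩ : ∃ k : ℕ, (1/(8*ε) : ℝ) ≤ (k:ℝ) := ⟨⌈1/(8*ε)⌉₊, Nat.le_ceil _⟩
    refine ⟨max (3*(4*k+5)) (⌈(2*(4*k+5):ℝ)/ε⌉₊ + 1), fun n hn => ⟨?_, exBCD_upper n⟩⟩
    have hn3N : 3*(4*k+5) ≤ n := le_trans (le_max_left _ _) hn
    have hNpos : 0 < 4*k+5 := by omega
    have hnε : (2*(4*k+5):ℝ)/ε ≤ (n:ℝ) := by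
      have h1 : ⌈(2*(4*k+5):ℝ)/ε⌉₊ + 1 ≤ n := le_trans (le_max_right _ _) hn
      have h2 : (⌈(2*(4*k+5):ℝ)/ε⌉₊ : ℝ) ≤ (n:ℝ) := by
        exact_mod_cast le_trans (Nat.le_succ _) h1
      exact le_trans (Nat.le_ceil _) h2
    -- the group count G and the parameter g
    set G := n / (4*k+5) with hGdef
    have hG3 : 3 ≤ G := by
      rw [hGdef]
      rw [Nat.le_div_iff_mul_le hNpos]
      omega
    set g := G - 2 with hgdef
    have hg2 : g + 2 = G := by omega
    have hNG : (4*k+5) * (g+2) ≤ n := by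
      rw [hg2, hGdef]
      calc (4*k+5) * (n / (4*k+5)) = n / (4*k+5) * (4*k+5) := by ring
        _ ≤ n := Nat.div_mul_le_self n (4*k+5)
    have hlow := exBCD_ge n k g hNG
    have hlowR : (((4*k+5) * ((k+1) * ((g+2) * (g+1))) : ℕ) : ℝ) ≤ (exBCD n : ℝ) := by
      exact_mod_cast hlow
    -- real versions of the quantities
    have hGup : ((4*k+5) : ℝ) * (G:ℝ) ≤ (n:ℝ) := by
      have : (4*k+5) * G ≤ n := by rw [hg2] at hNG; exact hNG
      exact_mod_cast this
    have hGdown : (n:ℝ) < ((4*k+5):ℝ) * (G:ℝ) + ((4*k+5):ℝ) := by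
      have h1 := Nat.div_add_mod n (4*k+5)
      have h2 := Nat.mod_lt n hNpos
      have : n < (4*k+5) * G + (4*k+5) := by
        rw [hGdef]
        omega
      exact_mod_cast this
    have hG3R : (3:ℝ) ≤ (G:ℝ) := by exact_mod_cast hG3
    have hn3NR : 3*((4*k+5):ℝ) ≤ (n:ℝ) := by exact_mod_cast hn3N
    have hVeq : (((4*k+5) * ((k+1) * ((g+2) * (g+1))) : ℕ) : ℝ)
        = ((4*k+5):ℝ) * (((k:ℝ)+1) * ((G:ℝ) * ((G:ℝ)-1))) := by
      have hgR : ((g:ℕ):ℝ) = (G:ℝ) - 2 := by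
        have h1 : ((g:ℕ):ℝ) + 2 = (G:ℝ) := by exact_mod_cast hg2
        linarith
      push_cast
      rw [hgR]
      ring
    rw [hVeq] at hlowR
    -- abbreviations
    set a : ℝ := ((4*k+5):ℝ) with hadef
    set b : ℝ := (G:ℝ) with hbdef
    have hapos : (0:ℝ) < a := by rw [hadef]; positivity
    have hkε : (1:ℝ) ≤ 8*ε*(k:ℝ) := by
      rw [div_le_iff₀ (by positivity)] at hk
      linarith [hk]
    -- step 1 : a * (k+1) * b * (b-1) ≥ (k+1) * (n - a) * (n - 2a) / a ... done multiplied by a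
    have s1 : (n:ℝ) - a ≤ a * b := by linarith
    have s2 : (n:ℝ) - 2*a ≤ a * (b - 1) := by nlinarith
    have s3 : (0:ℝ) ≤ (n:ℝ) - 2*a := by linarith
    have s4 : (0:ℝ) ≤ (n:ℝ) - a := by linarith
    have s6 : ((n:ℝ) - a) * ((n:ℝ) - 2*a) ≤ (a*b) * (a*(b-1)) :=
      mul_le_mul s1 s2 s3 (le_trans s4 s1)
    have s8 : (1/4 - ε/2) * a ≤ (k:ℝ) + 1 := by
      rw [hadef]
      nlinarith
    have hprodnn : (0:ℝ) ≤ ((n:ℝ) - a) * ((n:ℝ) - 2*a) := mul_nonneg s4 s3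
    have s9 : ((1/4 - ε/2) * a) * (((n:ℝ) - a) * ((n:ℝ) - 2*a))
        ≤ ((k:ℝ) + 1) * ((a*b) * (a*(b-1))) := by
      have t1 : ((1/4 - ε/2) * a) * (((n:ℝ) - a) * ((n:ℝ) - 2*a))
          ≤ ((k:ℝ) + 1) * (((n:ℝ) - a) * ((n:ℝ) - 2*a)) :=
        mul_le_mul_of_nonneg_right s8 hprodnn
      have t2 : ((k:ℝ) + 1) * (((n:ℝ) - a) * ((n:ℝ) - 2*a))
          ≤ ((k:ℝ) + 1) * ((a*b) * (a*(b-1))) :=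
        mul_le_mul_of_nonneg_left s6 (by positivity)
      exact le_trans t1 t2
    -- step 2 : (1/4 - ε) n² * a ≤ (1/4 - ε/2) a * (n-a)(n-2a)
    have hεn : 2*a ≤ ε * (n:ℝ) := by
      rw [div_le_iff₀ hε] at hnε
      linarith
    have s10 : (1/4 - ε) * (n:ℝ)^2 * a ≤ ((1/4 - ε/2) * a) * (((n:ℝ) - a) * ((n:ℝ) - 2*a)) := by
      have u0 : (0:ℝ) ≤ (n:ℝ) := Nat.cast_nonneg n
      have u1 : a * (n:ℝ) ≤ ε/2 * (n:ℝ)^2 := by nlinarith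
      have u2 : (1/4 - ε) * (n:ℝ)^2 ≤ (1/4 - ε/2) * (n:ℝ)^2 - a * (n:ℝ) := by nlinarith
      have u3 : (1/4 - ε/2) * (n:ℝ)^2 - a * (n:ℝ)
          ≤ (1/4 - ε/2) * ((n:ℝ)^2 - 3*a*(n:ℝ)) := by nlinarith
      have u4 : (n:ℝ)^2 - 3*a*(n:ℝ) ≤ ((n:ℝ) - a) * ((n:ℝ) - 2*a) := by nlinarith
      have u5 : (0:ℝ) ≤ 1/4 - ε/2 := by linarith
      have u6 : (1/4 - ε/2) * ((n:ℝ)^2 - 3*a*(n:ℝ))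
          ≤ (1/4 - ε/2) * (((n:ℝ) - a) * ((n:ℝ) - 2*a)) :=
        mul_le_mul_of_nonneg_left u4 u5
      nlinarith
    -- combine and cancel a
    have s11 : (1/4 - ε) * (n:ℝ)^2 * a ≤ (((k:ℝ)+1) * ((a*b) * (a*(b-1)))) := le_trans s10 s9
    have s12 : (1/4 - ε) * (n:ℝ)^2 * a ≤ (a * (((k:ℝ)+1) * (b * (b-1)))) * a := by
      calc (1/4 - ε) * (n:ℝ)^2 * a ≤ (((k:ℝ)+1) * ((a*b) * (a*(b-1)))) := s11
        _ = (a * (((k:ℝ)+1) * (b * (b-1)))) * a := by ring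
    have s13 : (1/4 - ε) * (n:ℝ)^2 ≤ a * (((k:ℝ)+1) * (b * (b-1))) :=
      le_of_mul_le_mul_right s12 hapos
    exact le_trans s13 hlowR
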